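/- arXiv:2306.11121 — 2 statements merged into one kernel-verified Lean document; each statement's English description precedes it below -/
import Mathlib

section
/- Let P be a symmetric positive definite d×d real matrix, g ∈ ℝ^d, and H a symmetric matrix with (1-c)·P ≼ H ≼ (1+c)·P for some 0 ≤ c < 1. Then the vector h = -H^{-1}g satisfies ‖h‖_P ≤ (1/(1-c))·‖g‖_{P^{-1}}, where ‖x‖_M = √(xᵀMx). -/
/-!
With `h = H⁻¹g`, the lower Loewner bound gives
`(1 - c)‖h‖_P² ≤ hᵀHh = hᵀg`, and `hᵀg ≤ ‖h‖_P ‖g‖_{P⁻¹}` is Cauchy–Schwarz for the inner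
product of `P`, applied to `h` and `P⁻¹g`. Dividing by `‖h‖_P` gives the bound.
-/

open Matrix

/-- `‖v‖_A = √(vᵀAv)`, the local norm induced by a matrix `A`. -/
noncomputable def qnorm {d : ℕ} (A : Matrix (Fin d) (Fin d) ℝ) (v : Fin d → ℝ) : ℝ :=
  Real.sqrt (v ⬝ᵥ A.mulVec v)

namespace Matrix

variable {d : ℕ} {P : Matrix (Fin d) (Fin d) ℝ}

lemma qnorm_nonneg (A : Matrix (Fin d) (Fin d) ℝ) (v : Fin d → ℝ) : 0 ≤ qnorm A v :=
  Real.sqrt_nonneg _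

lemma qnorm_neg (A : Matrix (Fin d) (Fin d) ℝ) (v : Fin d → ℝ) : qnorm A (-v) = qnorm A v := by
  simp only [qnorm, mulVec_neg, dotProduct_neg, neg_dotProduct, neg_neg]

lemma PosSemidef.qnorm_sq (hP : P.PosSemidef) (v : Fin d → ℝ) :
    qnorm P v ^ 2 = v ⬝ᵥ P *ᵥ v :=
  Real.sq_sqrt (by simpa using hP.dotProduct_mulVec_nonneg v)

lemma PosSemidef.dotProduct_mulVec_sq_le (hP : P.PosSemidef) (x y : Fin d → ℝ) :
    (x ⬝ᵥ P *ᵥ y) ^ 2 ≤ (x ⬝ᵥ P *ᵥ x) * (y ⬝ᵥ P *ᵥ y) := by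
  let _ := P.toSeminormedAddCommGroup hP
  let _ := P.toInnerProductSpace hP
  have hinner (u v : Fin d → ℝ) : (inner ℝ u v : ℝ) = u ⬝ᵥ P *ᵥ v := dotProduct_comm _ _
  simpa only [hinner, sq] using real_inner_mul_inner_self_le x y

lemma PosSemidef.dotProduct_mulVec_le_qnorm_mul_qnorm (hP : P.PosSemidef) (x y : Fin d → ℝ) :
    x ⬝ᵥ P *ᵥ y ≤ qnorm P x * qnorm P y := by
  rw [qnorm, qnorm, ← Real.sqrt_mul (by simpa using hP.dotProduct_mulVec_nonneg x)]
  exact (le_abs_self _).trans (Real.abs_le_sqrt (hP.dotProduct_mulVec_sq_le x y))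

lemma qnorm_mulVec_inv (hP : IsUnit P.det) (g : Fin d → ℝ) :
    qnorm P (P⁻¹ *ᵥ g) = qnorm P⁻¹ g := by
  rw [qnorm, qnorm, mulVec_mulVec, mul_nonsing_inv P hP, one_mulVec, dotProduct_comm]

/-- Cauchy–Schwarz between `‖·‖_P` and its dual norm `‖·‖_{P⁻¹}`. -/
lemma PosDef.dotProduct_le_qnorm_mul_qnorm_inv (hP : P.PosDef) (x g : Fin d → ℝ) :
    x ⬝ᵥ g ≤ qnorm P x * qnorm P⁻¹ g := by
  have hdet : IsUnit P.det := hP.det_pos.ne'.isUnit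
  calc x ⬝ᵥ g = x ⬝ᵥ P *ᵥ (P⁻¹ *ᵥ g) := by
        rw [mulVec_mulVec, mul_nonsing_inv P hdet, one_mulVec]
    _ ≤ qnorm P x * qnorm P (P⁻¹ *ᵥ g) :=
        hP.posSemidef.dotProduct_mulVec_le_qnorm_mul_qnorm _ _
    _ = qnorm P x * qnorm P⁻¹ g := by rw [qnorm_mulVec_inv hdet]

variable {H : Matrix (Fin d) (Fin d) ℝ} {a : ℝ}

lemma PosDef.of_posSemidef_sub_smul (hP : P.PosDef) (ha : 0 < a)
    (hlow : (H - a • P).PosSemidef) : H.PosDef := by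
  simpa using (hP.smul ha).add_posSemidef hlow

lemma mul_dotProduct_mulVec_le_of_posSemidef_sub_smul (hlow : (H - a • P).PosSemidef)
    (v : Fin d → ℝ) :
    a * (v ⬝ᵥ P *ᵥ v) ≤ v ⬝ᵥ H *ᵥ v := by
  have := hlow.dotProduct_mulVec_nonneg v
  rw [star_trivial, sub_mulVec, dotProduct_sub, smul_mulVec, dotProduct_smul, smul_eq_mul] at this
  linarith

lemma mul_qnorm_inv_mulVec_le (hP : P.PosDef) (ha : 0 < a) (hlow : (H - a • P).PosSemidef)
    (g : Fin d → ℝ) : a * qnorm P (H⁻¹ *ᵥ g) ≤ qnorm P⁻¹ g := by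
  set h := H⁻¹ *ᵥ g
  have hHh : H *ᵥ h = g := by
    have hdet : IsUnit H.det := (hP.of_posSemidef_sub_smul ha hlow).det_pos.ne'.isUnit
    rw [mulVec_mulVec, mul_nonsing_inv H hdet, one_mulVec]
  have key : qnorm P h * (a * qnorm P h) ≤ qnorm P h * qnorm P⁻¹ g :=
    calc qnorm P h * (a * qnorm P h) = a * (h ⬝ᵥ P *ᵥ h) := by
          rw [← hP.posSemidef.qnorm_sq]; ring
      _ ≤ h ⬝ᵥ H *ᵥ h := mul_dotProduct_mulVec_le_of_posSemidef_sub_smul hlow h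
      _ = h ⬝ᵥ g := by rw [hHh]
      _ ≤ qnorm P h * qnorm P⁻¹ g := hP.dotProduct_le_qnorm_mul_qnorm_inv h g
  rcases (qnorm_nonneg P h).eq_or_lt with h0 | h0
  · rw [← h0, mul_zero]
    exact qnorm_nonneg _ _
  · exact le_of_mul_le_mul_left key h0

end Matrix

theorem approx_newton_step_norm_bound_general {d : ℕ} (c : ℝ) (hc1 : c < 1)
    (P H : Matrix (Fin d) (Fin d) ℝ) (g : Fin d → ℝ)
    (hP : P.PosDef)
    (hlow : (H - (1 - c) • P).PosSemidef) :
    qnorm P (-(H⁻¹.mulVec g)) ≤ (1 / (1 - c)) * qnorm P⁻¹ g := by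
  have hc : 0 < 1 - c := sub_pos.mpr hc1
  rw [qnorm_neg, one_div, ← div_eq_inv_mul, le_div_iff₀ hc, mul_comm]
  exact mul_qnorm_inv_mulVec_le hP hc hlow g

/-- bound on the norm of an approximate Newton step. If
`(1-c)·P ≼ H ≼ (1+c)·P` with `0 ≤ c < 1` and `P` positive definite, then
`h = -H⁻¹g` satisfies `‖h‖_P ≤ (1/(1-c))·‖g‖_{P⁻¹}`. -/
theorem approx_newton_step_norm_bound {d : ℕ} (c : ℝ) (hc0 : 0 ≤ c) (hc1 : c < 1)
    (P H : Matrix (Fin d) (Fin d) ℝ) (g : Fin d → ℝ)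
    (hP : P.PosDef) (hH : H.IsHermitian)
    (hlow : (H - (1 - c) • P).PosSemidef) (hup : ((1 + c) • P - H).PosSemidef) :
    qnorm P (-(H⁻¹.mulVec g)) ≤ (1 / (1 - c)) * qnorm P⁻¹ g :=
  approx_newton_step_norm_bound_general c hc1 P H g hP hlow
end

section
/- Let f: int K → ℝ be a self-concordant function with constant M_f ≥ 1 and x ∈ int K. Then the open Dikin ellipsoid E_x = {w ∈ ℝ^d : ‖w - x‖_{∇²f(x)} < 1/M_f} is contained in int K, and for all w ∈ E_x, ‖w - x‖_{∇²f(w)} ≤ ‖w - x‖_{∇²f(x)} / (1 - M_f·‖w - x‖_{∇²f(x)}). -/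
open Matrix Filter Topology

/-- `f` is a self-concordant function on `int K` with constant `M`, with Hessian given
by the (symmetric) matrix field `hess`: `f` is convex and `C³` on `int K`, `hess` is its
Hessian, `f` blows up along any sequence converging to a boundary point of `K`, and the
third derivative is controlled by the local norm:
`|∇³f(x)[u,u,u]| ≤ 2·M·‖u‖³_{∇²f(x)}`. -/
def SelfConcordantWith {d : ℕ} (K : Set (Fin d → ℝ)) (f : (Fin d → ℝ) → ℝ)
    (hess : (Fin d → ℝ) → Matrix (Fin d) (Fin d) ℝ) (M : ℝ) : Prop :=
  ConvexOn ℝ (interior K) f ∧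
  ContDiffOn ℝ 3 f (interior K) ∧
  (∀ x ∈ interior K, (hess x).IsHermitian) ∧
  (∀ x ∈ interior K, ∀ u, (iteratedFDeriv ℝ 2 f x fun _ => u) = u ⬝ᵥ (hess x).mulVec u) ∧
  (∀ x ∈ frontier K, ∀ s : ℕ → Fin d → ℝ, (∀ n, s n ∈ interior K) →
      Tendsto s atTop (nhds x) → Tendsto (fun n => f (s n)) atTop atTop) ∧
  (∀ x ∈ interior K, ∀ u, |iteratedFDeriv ℝ 3 f x fun _ => u| ≤ 2 * M * qnorm (hess x) u ^ 3)

/-- `grad` is the gradient field of `f` on `int K`. -/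
def GradOf {d : ℕ} (K : Set (Fin d → ℝ)) (f : (Fin d → ℝ) → ℝ)
    (grad : (Fin d → ℝ) → (Fin d → ℝ)) : Prop :=
  ∀ x ∈ interior K, ∀ u, fderiv ℝ f x u = grad x ⬝ᵥ u

/-!
Along a line `s ↦ x + s • u`, the second directional derivative `ψ(s) = ∇²f(x + s u)[u,u]` is
nonnegative by convexity and satisfies `ψ' ≤ 2 M ψ^{3/2}` by self-concordance, so `1/√ψ`
decreases at rate at most `M`. Hence `√ψ(t) ≤ √ψ(0) / (1 - M t √ψ(0))`, which is the Dikin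
bound at `t = 1`. When `M √ψ(0) < 1` this keeps `ψ`, hence `f`, bounded on any initial piece of
the segment `[x, x + u]` lying in `int K`; since `f` blows up at the boundary, the segment cannot
leave `int K`, by connectedness of `[0, 1]`.
-/

open Set

section Line

variable {E F : Type*} [NormedAddCommGroup E] [NormedSpace ℝ E]
  [NormedAddCommGroup F] [NormedSpace ℝ F]

lemma hasDerivAt_iteratedFDeriv_line {f : E → F} {O : Set E} {N : WithTop ℕ∞} {n : ℕ}
    (hO : IsOpen O) (hf : ContDiffOn ℝ N f O) (hn : (n : WithTop ℕ∞) < N)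
    (x u : E) {t : ℝ} (ht : x + t • u ∈ O) :
    HasDerivAt (fun s : ℝ => iteratedFDeriv ℝ n f (x + s • u) fun _ => u)
      (iteratedFDeriv ℝ (n + 1) f (x + t • u) fun _ => u) t := by
  have hdiff : DifferentiableAt ℝ (iteratedFDeriv ℝ n f) (x + t • u) :=
    ((hf.differentiableOn_iteratedFDerivWithin hn hO.uniqueDiffOn _ ht).differentiableAt
      (hO.mem_nhds ht)).congr_of_eventuallyEq
      (eventuallyEq_of_mem (hO.mem_nhds ht) (iteratedFDerivWithin_of_isOpen n hO)).symm
  have hline : HasDerivAt (fun s : ℝ => x + s • u) u t := by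
    simpa using ((hasDerivAt_id t).smul_const u).const_add x
  exact ((ContinuousMultilinearMap.apply ℝ (fun _ : Fin n => E) F fun _ => u).hasFDerivAt.comp
    _ hdiff.hasFDerivAt).comp_hasDerivAt t hline

lemma ConvexOn.comp_add_smul {s : Set E} {f : E → ℝ} (hf : ConvexOn ℝ s f) (x u : E) :
    ConvexOn ℝ {t : ℝ | x + t • u ∈ s} fun t => f (x + t • u) := by
  set L : ℝ →ᵃ[ℝ] E := AffineMap.lineMap x (x + u)
  have hL : ∀ t : ℝ, L t = x + t • u := fun t => by
    simp [L, AffineMap.lineMap_apply, add_comm]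
  simpa only [Set.preimage, Function.comp_def, hL] using hf.comp_affineMap L

end Line

lemma monotoneOn_Icc_of_hasDerivAt_nonneg {g g' : ℝ → ℝ} {a b : ℝ}
    (hd : ∀ s ∈ Icc a b, HasDerivAt g (g' s) s) (hnn : ∀ s ∈ Icc a b, 0 ≤ g' s) :
    MonotoneOn g (Icc a b) :=
  monotoneOn_of_hasDerivWithinAt_nonneg (convex_Icc a b)
    (fun s hs => (hd s hs).continuousAt.continuousWithinAt)
    (fun s hs => (hd s (interior_subset hs)).hasDerivWithinAt)
    (fun s hs => hnn s (interior_subset hs))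

lemma ConvexOn.second_deriv_nonneg {S : Set ℝ} {f f' : ℝ → ℝ} {x f'' : ℝ}
    (hf : ConvexOn ℝ S f) (hS : IsOpen S) (hf' : ∀ y ∈ S, HasDerivAt f (f' y) y)
    (hx : x ∈ S) (hf'' : HasDerivAt f' f'' x) : 0 ≤ f'' := by
  have hmono : MonotoneOn f' S := by
    intro a ha b hb hab
    rcases hab.eq_or_lt with rfl | hlt
    · rfl
    · exact (hf.le_slope_of_hasDerivAt ha hb hlt (hf' a ha)).trans
        (hf.slope_le_of_hasDerivAt ha hb hlt (hf' b hb))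
  have hacc : AccPt x (𝓟 S) := by
    simpa using (PerfectSpace.univ_preperfect x (mem_univ x)).nhds_inter (hS.mem_nhds hx)
  exact hf''.hasDerivWithinAt.nonneg_of_monotoneOn hacc hmono

lemma Convex.Ico_subset_of_mem_closure {G : Set ℝ} (hG : Convex ℝ G) {a t : ℝ} (ha : a ∈ G)
    (ht : t ∈ closure G) (htG : t ∉ G) : Ico a t ⊆ G := by
  rintro s ⟨has, hst⟩
  obtain ⟨y, hyG, hty⟩ := Metric.mem_closure_iff.1 ht (t - s) (by linarith)
  have hyt : y < t := lt_of_not_ge fun hty' =>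
    htG (hG.ordConnected.out ha hyG ⟨has.trans hst.le, hty'⟩)
  rw [Real.dist_eq, abs_of_pos (by linarith)] at hty
  exact hG.ordConnected.out ha hyG ⟨has, by linarith⟩

lemma mul_one_sub_le_of_hasDerivAt_le_sq {w w' : ℝ → ℝ} {M t : ℝ} (ht : 0 ≤ t)
    (hpos : ∀ s ∈ Icc 0 t, 0 < w s) (hd : ∀ s ∈ Icc 0 t, HasDerivAt w (w' s) s)
    (hle : ∀ s ∈ Icc 0 t, w' s ≤ M * w s ^ 2) :
    w t * (1 - M * t * w 0) ≤ w 0 := by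
  have hmono : MonotoneOn (fun s => (w s)⁻¹ + M * s) (Icc 0 t) := by
    refine monotoneOn_Icc_of_hasDerivAt_nonneg (g' := fun s => -w' s / w s ^ 2 + M)
      (fun s hs => ?_) (fun s hs => ?_)
    · exact (((hd s hs).inv (hpos s hs).ne').add ((hasDerivAt_id' s).const_mul M)).congr_deriv
        (by ring)
    · have := (div_le_iff₀ (pow_pos (hpos s hs) 2)).2 (hle s hs)
      rw [neg_div]
      linarith
  have h := hmono (left_mem_Icc.2 ht) (right_mem_Icc.2 ht) ht
  have h0 := hpos 0 (left_mem_Icc.2 ht)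
  have ht' := hpos t (right_mem_Icc.2 ht)
  simp only [mul_zero, add_zero] at h
  have := mul_le_mul_of_nonneg_left h (mul_pos h0 ht').le
  field_simp at this
  nlinarith

lemma sqrt_mul_one_sub_le_of_hasDerivAt_le {ψ ψ' : ℝ → ℝ} {M t : ℝ} (hM : 0 ≤ M)
    (ht : 0 ≤ t) (hψ : ∀ s ∈ Icc 0 t, 0 ≤ ψ s) (hd : ∀ s ∈ Icc 0 t, HasDerivAt ψ (ψ' s) s)
    (hle : ∀ s ∈ Icc 0 t, ψ' s ≤ 2 * M * √(ψ s) ^ 3) :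
    √(ψ t) * (1 - M * t * √(ψ 0)) ≤ √(ψ 0) := by
  -- `w = √(ψ + ε²)` is positive and satisfies the Riccati inequality `w' ≤ M w²`; let `ε → 0`.
  have hε : ∀ ε > 0,
      √(ψ t + ε ^ 2) * (1 - M * t * √(ψ 0 + ε ^ 2)) ≤ √(ψ 0 + ε ^ 2) := by
    intro ε hε
    have hpos : ∀ s ∈ Icc 0 t, 0 < ψ s + ε ^ 2 := fun s hs =>
      add_pos_of_nonneg_of_pos (hψ s hs) (pow_pos hε 2)
    refine mul_one_sub_le_of_hasDerivAt_le_sq (w := fun s => √(ψ s + ε ^ 2))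
      (w' := fun s => ψ' s / (2 * √(ψ s + ε ^ 2))) ht
      (fun s hs => Real.sqrt_pos.2 (hpos s hs))
      (fun s hs => ((hd s hs).add_const _).sqrt (hpos s hs).ne') (fun s hs => ?_)
    have hsqrt : √(ψ s) ≤ √(ψ s + ε ^ 2) := Real.sqrt_le_sqrt (by nlinarith)
    rw [div_le_iff₀ (by positivity [Real.sqrt_pos.2 (hpos s hs)])]
    calc ψ' s ≤ 2 * M * √(ψ s) ^ 3 := hle s hs
      _ ≤ 2 * M * √(ψ s + ε ^ 2) ^ 3 := by gcongr
      _ = M * √(ψ s + ε ^ 2) ^ 2 * (2 * √(ψ s + ε ^ 2)) := by ring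
  have hcont : ∀ a : ℝ, Continuous fun ε : ℝ => √(a + ε ^ 2) := fun a => by fun_prop
  have hlim := le_of_tendsto_of_tendsto
    ((((hcont _).mul (continuous_const.sub (continuous_const.mul (hcont _)))).tendsto 0).mono_left
      nhdsWithin_le_nhds)
    (((hcont _).tendsto 0).mono_left nhdsWithin_le_nhds)
    (eventually_nhdsWithin_of_forall (s := Ioi 0) hε)
  simpa using hlim

lemma le_add_abs_add_of_hasDerivAt_le {φ φ' φ'' : ℝ → ℝ} {B s : ℝ} (hs : s ∈ Icc 0 1)
    (hB : 0 ≤ B) (h1 : ∀ σ ∈ Icc 0 s, HasDerivAt φ (φ' σ) σ)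
    (h2 : ∀ σ ∈ Icc 0 s, HasDerivAt φ' (φ'' σ) σ)
    (hle : ∀ σ ∈ Icc 0 s, φ'' σ ≤ B) :
    φ s ≤ φ 0 + |φ' 0| + B := by
  have hφ' : ∀ σ ∈ Icc 0 s, φ' σ ≤ |φ' 0| + B := by
    have hmono := monotoneOn_Icc_of_hasDerivAt_nonneg (g := fun σ => B * σ - φ' σ)
      (g' := fun σ => B - φ'' σ)
      (fun σ hσ => (((hasDerivAt_id' σ).const_mul B).sub (h2 σ hσ)).congr_deriv (by ring))
      (fun σ hσ => sub_nonneg.2 (hle σ hσ))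
    intro σ hσ
    have := hmono (left_mem_Icc.2 hs.1) hσ hσ.1
    simp only [mul_zero, zero_sub] at this
    nlinarith [le_abs_self (φ' 0), hσ.2, hs.2]
  have hmono := monotoneOn_Icc_of_hasDerivAt_nonneg (g := fun σ => (|φ' 0| + B) * σ - φ σ)
    (g' := fun σ => |φ' 0| + B - φ' σ)
    (fun σ hσ => (((hasDerivAt_id' σ).const_mul _).sub (h1 σ hσ)).congr_deriv (by ring))
    (fun σ hσ => sub_nonneg.2 (hφ' σ hσ))
  have := hmono (left_mem_Icc.2 hs.1) (right_mem_Icc.2 hs.1) hs.1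
  simp only [mul_zero, zero_sub] at this
  nlinarith [abs_nonneg (φ' 0), hs.2]

namespace SelfConcordantWith

variable {d : ℕ} {K : Set (Fin d → ℝ)} {f : (Fin d → ℝ) → ℝ}
  {hess : (Fin d → ℝ) → Matrix (Fin d) (Fin d) ℝ} {M : ℝ}

lemma hasDerivAt_line (hsc : SelfConcordantWith K f hess M) {n : ℕ} (hn : n < 3)
    (x u : Fin d → ℝ) {t : ℝ} (ht : x + t • u ∈ interior K) :
    HasDerivAt (fun s : ℝ => iteratedFDeriv ℝ n f (x + s • u) fun _ => u)
      (iteratedFDeriv ℝ (n + 1) f (x + t • u) fun _ => u) t :=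
  hasDerivAt_iteratedFDeriv_line isOpen_interior hsc.2.1 (by exact_mod_cast hn) x u ht

lemma hasDerivAt_comp_line (hsc : SelfConcordantWith K f hess M)
    (x u : Fin d → ℝ) {t : ℝ} (ht : x + t • u ∈ interior K) :
    HasDerivAt (fun s : ℝ => f (x + s • u))
      (iteratedFDeriv ℝ 1 f (x + t • u) fun _ => u) t := by
  simpa using hsc.hasDerivAt_line (n := 0) (by norm_num) x u ht

lemma iteratedFDeriv_two_nonneg (hsc : SelfConcordantWith K f hess M) {x : Fin d → ℝ}
    (hx : x ∈ interior K) (u : Fin d → ℝ) :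
    0 ≤ iteratedFDeriv ℝ 2 f x fun _ => u := by
  have hG : IsOpen {s : ℝ | x + s • u ∈ interior K} := isOpen_interior.preimage (by fun_prop)
  have h0 : x + (0 : ℝ) • u ∈ interior K := by simpa using hx
  simpa using (hsc.1.comp_add_smul x u).second_deriv_nonneg hG
    (fun s hs => hsc.hasDerivAt_comp_line x u hs) h0
    (hsc.hasDerivAt_line (n := 1) (by norm_num) x u h0)

lemma qnorm_eq_sqrt (hsc : SelfConcordantWith K f hess M) {x : Fin d → ℝ}
    (hx : x ∈ interior K) (u : Fin d → ℝ) :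
    qnorm (hess x) u = √(iteratedFDeriv ℝ 2 f x fun _ => u) := by
  rw [qnorm, hsc.2.2.2.1 x hx u]

lemma qnorm_mul_one_sub_le (hsc : SelfConcordantWith K f hess M) (hM : 0 ≤ M)
    {x u : Fin d → ℝ} {t : ℝ} (ht : 0 ≤ t)
    (hseg : ∀ s ∈ Icc 0 t, x + s • u ∈ interior K) :
    qnorm (hess (x + t • u)) u * (1 - M * t * qnorm (hess x) u) ≤ qnorm (hess x) u := by
  have hx : x ∈ interior K := by simpa using hseg 0 (left_mem_Icc.2 ht)
  rw [hsc.qnorm_eq_sqrt (hseg t (right_mem_Icc.2 ht)), hsc.qnorm_eq_sqrt hx]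
  simpa using sqrt_mul_one_sub_le_of_hasDerivAt_le
    (ψ := fun s => iteratedFDeriv ℝ 2 f (x + s • u) fun _ => u) hM ht
    (fun s hs => hsc.iteratedFDeriv_two_nonneg (hseg s hs) u)
    (fun s hs => hsc.hasDerivAt_line (n := 2) (by norm_num) x u (hseg s hs))
    (fun s hs => by
      rw [← hsc.qnorm_eq_sqrt (hseg s hs)]
      exact (le_abs_self _).trans (hsc.2.2.2.2.2 _ (hseg s hs) u))

lemma iteratedFDeriv_two_line_le (hsc : SelfConcordantWith K f hess M) (hM : 0 ≤ M)
    {x u : Fin d → ℝ} (hMr : M * qnorm (hess x) u < 1) {s : ℝ} (hs : s ∈ Icc 0 1)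
    (hseg : ∀ σ ∈ Icc 0 s, x + σ • u ∈ interior K) :
    (iteratedFDeriv ℝ 2 f (x + s • u) fun _ => u)
      ≤ (qnorm (hess x) u / (1 - M * qnorm (hess x) u)) ^ 2 := by
  set r := qnorm (hess x) u
  have hr : 0 ≤ r := Real.sqrt_nonneg _
  have hq : qnorm (hess (x + s • u)) u ≤ r / (1 - M * r) := by
    rw [le_div_iff₀ (by linarith)]
    calc qnorm (hess (x + s • u)) u * (1 - M * r)
        ≤ qnorm (hess (x + s • u)) u * (1 - M * s * r) := by
          gcongr
          · exact Real.sqrt_nonneg _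
          · nlinarith [mul_nonneg hM hr, hs.2]
      _ ≤ r := hsc.qnorm_mul_one_sub_le hM hs.1 hseg
  rw [hsc.qnorm_eq_sqrt (hseg s (right_mem_Icc.2 hs.1)), Real.sqrt_le_iff] at hq
  exact hq.2

lemma apply_add_smul_le (hsc : SelfConcordantWith K f hess M) (hM : 0 ≤ M)
    {x u : Fin d → ℝ} (hMr : M * qnorm (hess x) u < 1) {s : ℝ} (hs : s ∈ Icc 0 1)
    (hseg : ∀ σ ∈ Icc 0 s, x + σ • u ∈ interior K) :
    f (x + s • u) ≤ f x + |iteratedFDeriv ℝ 1 f x fun _ => u|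
      + (qnorm (hess x) u / (1 - M * qnorm (hess x) u)) ^ 2 := by
  simpa using le_add_abs_add_of_hasDerivAt_le (φ := fun s => f (x + s • u)) hs (sq_nonneg _)
    (fun σ hσ => hsc.hasDerivAt_comp_line x u (hseg σ hσ))
    (fun σ hσ => hsc.hasDerivAt_line (n := 1) (by norm_num) x u (hseg σ hσ))
    (fun σ hσ => hsc.iteratedFDeriv_two_line_le hM hMr ⟨hσ.1, hσ.2.trans hs.2⟩
      fun τ hτ => hseg τ ⟨hτ.1, hτ.2.trans hσ.2⟩)

lemma add_mem_interior (hsc : SelfConcordantWith K f hess M) (hM : 0 ≤ M)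
    {x u : Fin d → ℝ} (hx : x ∈ interior K) (hMr : M * qnorm (hess x) u < 1) :
    x + u ∈ interior K := by
  set G := {s : ℝ | x + s • u ∈ interior K}
  have hline : Continuous fun s : ℝ => x + s • u := by fun_prop
  have h0 : (0 : ℝ) ∈ G := by simpa [G] using hx
  suffices Icc (0 : ℝ) 1 ⊆ G by simpa [G] using this (right_mem_Icc.2 zero_le_one)
  refine isPreconnected_Icc.subset_of_closure_inter_subset (isOpen_interior.preimage hline)
    ⟨0, left_mem_Icc.2 zero_le_one, h0⟩ ?_
  rintro t ⟨htcl, ht0, ht1⟩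
  by_contra htG
  have hIco : Ico 0 t ⊆ G := (hsc.1.comp_add_smul x u).1.Ico_subset_of_mem_closure h0 htcl htG
  have hfront : x + t • u ∈ frontier K :=
    ⟨closure_mono interior_subset
      (map_mem_closure (f := fun s : ℝ => x + s • u) hline htcl fun _ hs => hs), htG⟩
  have ht_pos : 0 < t := ht0.lt_of_ne fun h => htG (h ▸ h0)
  obtain ⟨τ, -, hτ, hτt⟩ := exists_seq_strictMono_tendsto' ht_pos
  have hblow := hsc.2.2.2.2.1 _ hfront (fun n => x + τ n • u)
    (fun n => hIco ⟨(hτ n).1.le, (hτ n).2⟩) ((hline.tendsto _).comp hτt)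
  obtain ⟨n, hn⟩ := (hblow.eventually_gt_atTop _).exists
  exact hn.not_ge (hsc.apply_add_smul_le hM hMr ⟨(hτ n).1.le, (hτ n).2.le.trans ht1⟩
    fun σ hσ => hIco ⟨hσ.1, hσ.2.trans_lt (hτ n).2⟩)

end SelfConcordantWith

theorem dikin_ellipsoid_general {d : ℕ} (K : Set (Fin d → ℝ))
    (f : (Fin d → ℝ) → ℝ) (hess : (Fin d → ℝ) → Matrix (Fin d) (Fin d) ℝ) (M : ℝ)
    (hM : 1 ≤ M) (hsc : SelfConcordantWith K f hess M)
    (x : Fin d → ℝ) (hx : x ∈ interior K) :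
    {w : Fin d → ℝ | qnorm (hess x) (w - x) < 1 / M} ⊆ interior K ∧
      ∀ w : Fin d → ℝ, qnorm (hess x) (w - x) < 1 / M →
        qnorm (hess w) (w - x)
          ≤ qnorm (hess x) (w - x) / (1 - M * qnorm (hess x) (w - x)) := by
  have hM0 : 0 < M := one_pos.trans_le hM
  have hMr : ∀ w, qnorm (hess x) (w - x) < 1 / M → M * qnorm (hess x) (w - x) < 1 :=
    fun w hw => by rwa [lt_div_iff₀' hM0] at hw
  have hmem : ∀ w, qnorm (hess x) (w - x) < 1 / M → w ∈ interior K := fun w hw => by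
    simpa using hsc.add_mem_interior hM0.le hx (u := w - x) (hMr w hw)
  refine ⟨hmem, fun w hw => ?_⟩
  rw [le_div_iff₀ (by linarith [hMr w hw])]
  simpa using hsc.qnorm_mul_one_sub_le hM0.le zero_le_one (u := w - x)
    fun s hs => hsc.1.1.add_smul_sub_mem hx (hmem w hw) hs

/-- the open Dikin ellipsoid
`E_x = {w : ‖w - x‖_{∇²f(x)} < 1/M_f}` of a self-concordant function with constant
`M_f ≥ 1` is contained in `int K`, and on it
`‖w - x‖_{∇²f(w)} ≤ ‖w - x‖_{∇²f(x)} / (1 - M_f·‖w - x‖_{∇²f(x)})`. -/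
theorem dikin_ellipsoid {d : ℕ} (K : Set (Fin d → ℝ)) (hK : Convex ℝ K)
    (f : (Fin d → ℝ) → ℝ) (hess : (Fin d → ℝ) → Matrix (Fin d) (Fin d) ℝ) (M : ℝ)
    (hM : 1 ≤ M) (hsc : SelfConcordantWith K f hess M)
    (x : Fin d → ℝ) (hx : x ∈ interior K) :
    {w : Fin d → ℝ | qnorm (hess x) (w - x) < 1 / M} ⊆ interior K ∧
      ∀ w : Fin d → ℝ, qnorm (hess x) (w - x) < 1 / M →
        qnorm (hess w) (w - x)
          ≤ qnorm (hess x) (w - x) / (1 - M * qnorm (hess x) (w - x)) :=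
  dikin_ellipsoid_general K f hess M hM hsc x hx
end
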